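/- arXiv:0903.0284 — 5 statements merged into one kernel-verified Lean document; each statement's English description precedes it below -/
import Mathlib

section
/- Let v₀, v₁, v₂, v₃ ∈ ℂ² with det(vᵢ,vⱼ) ≠ 0 for all i < j. Define w₀ := Log det(v₀,v₃) + Log det(v₁,v₂) − Log det(v₀,v₂) − Log det(v₁,v₃), w₁ := Log det(v₀,v₂) + Log det(v₁,v₃) − Log det(v₀,v₁) − Log det(v₂,v₃), and w₂ := Log det(v₀,v₁) + Log det(v₂,v₃) − Log det(v₀,v₃) − Log det(v₁,v₂). Then w₀ + w₁ + w₂ = 0, exp(w₀) = z and exp(w₁) = 1/(1−z), where z := (det(v₀,v₃)·det(v₁,v₂))/(det(v₀,v₂)·det(v₁,v₃)). In other words, (w₀,w₁,w₂) is a combinatorial flattening of the simplex with cross-ratio z. -/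
/-- `det(u,w) = u₁w₂ − u₂w₁` for `u, w ∈ ℂ²`. -/
noncomputable def dd (u w : ℂ × ℂ) : ℂ := u.1 * w.2 - u.2 * w.1

theorem stmt4 (v₀ v₁ v₂ v₃ : ℂ × ℂ)
    (h01 : dd v₀ v₁ ≠ 0) (h02 : dd v₀ v₂ ≠ 0) (h03 : dd v₀ v₃ ≠ 0)
    (h12 : dd v₁ v₂ ≠ 0) (h13 : dd v₁ v₃ ≠ 0) (h23 : dd v₂ v₃ ≠ 0) :
    let w₀ : ℂ := Complex.log (dd v₀ v₃) + Complex.log (dd v₁ v₂)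
      - Complex.log (dd v₀ v₂) - Complex.log (dd v₁ v₃)
    let w₁ : ℂ := Complex.log (dd v₀ v₂) + Complex.log (dd v₁ v₃)
      - Complex.log (dd v₀ v₁) - Complex.log (dd v₂ v₃)
    let w₂ : ℂ := Complex.log (dd v₀ v₁) + Complex.log (dd v₂ v₃)
      - Complex.log (dd v₀ v₃) - Complex.log (dd v₁ v₂)
    let z : ℂ := (dd v₀ v₃ * dd v₁ v₂) / (dd v₀ v₂ * dd v₁ v₃)
    w₀ + w₁ + w₂ = 0 ∧ Complex.exp w₀ = z ∧ Complex.exp w₁ = 1 / (1 - z) := by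
  intro w₀ w₁ w₂ z
  have plucker : dd v₀ v₁ * dd v₂ v₃ = dd v₀ v₂ * dd v₁ v₃ - dd v₀ v₃ * dd v₁ v₂ := by
    simp only [dd]; ring
  have hz : 1 - z = dd v₀ v₁ * dd v₂ v₃ / (dd v₀ v₂ * dd v₁ v₃) := by
    rw [plucker]; simp only [z]
    field_simp
  refine ⟨by simp only [w₀, w₁, w₂]; ring, ?_, ?_⟩
  · simp only [w₀, Complex.exp_sub, Complex.exp_add, Complex.exp_log h03,
      Complex.exp_log h12, Complex.exp_log h02, Complex.exp_log h13, z]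
    rw [div_div]
  · rw [hz, one_div_div]
    simp only [w₁, Complex.exp_sub, Complex.exp_add, Complex.exp_log h03,
      Complex.exp_log h12, Complex.exp_log h02, Complex.exp_log h13,
      Complex.exp_log h01, Complex.exp_log h23]
    rw [div_div]
end

section
/- Let v₀, v₁, v₂, v₃ ∈ ℂ² with det(vᵢ,vⱼ) ≠ 0 for all i < j, and let w₀, w₁ be the first two log-parameters of (v₀,v₁,v₂,v₃). For a triple (u₀,u₁,u₂) of vectors in ℂ² with pairwise nonzero determinants, write μ(u₀,u₁,u₂) := ℓ(u₀,u₁)∧ℓ(u₀,u₂) − ℓ(u₀,u₁)∧ℓ(u₁,u₂) + ℓ(u₀,u₂)∧ℓ(u₁,u₂) ∈ ⋀²_ℤ ℂ, where ℓ(u,w) := Log det(u,w). Then in the second exterior power ⋀²_ℤ ℂ of ℂ as a ℤ-module one has w₀ ∧ w₁ = μ(v₁,v₂,v₃) − μ(v₀,v₂,v₃) + μ(v₀,v₁,v₃) − μ(v₀,v₁,v₂). -/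
/-- The wedge `a ∧ b` of two elements of `ℂ`, viewed in degree two of the exterior
algebra of `ℂ` as a `ℤ`-module (i.e. in `⋀²_ℤ ℂ`). -/
noncomputable def wedge (a b : ℂ) : ExteriorAlgebra ℤ ℂ :=
  ExteriorAlgebra.ι ℤ a * ExteriorAlgebra.ι ℤ b

/-- First log-parameter of the 4-tuple `(a,b,c,d)`. -/
noncomputable def w0 (a b c d : ℂ × ℂ) : ℂ :=
  Complex.log (dd a d) + Complex.log (dd b c) - Complex.log (dd a c) - Complex.log (dd b d)

/-- Second log-parameter of the 4-tuple `(a,b,c,d)`. -/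
noncomputable def w1 (a b c d : ℂ × ℂ) : ℂ :=
  Complex.log (dd a c) + Complex.log (dd b d) - Complex.log (dd a b) - Complex.log (dd c d)

/-- `μ(u₀,u₁,u₂) = ℓ(u₀,u₁)∧ℓ(u₀,u₂) − ℓ(u₀,u₁)∧ℓ(u₁,u₂) + ℓ(u₀,u₂)∧ℓ(u₁,u₂)`
where `ℓ(u,w) = Log det(u,w)`. -/
noncomputable def mu (u₀ u₁ u₂ : ℂ × ℂ) : ExteriorAlgebra ℤ ℂ :=
  wedge (Complex.log (dd u₀ u₁)) (Complex.log (dd u₀ u₂))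
    - wedge (Complex.log (dd u₀ u₁)) (Complex.log (dd u₁ u₂))
    + wedge (Complex.log (dd u₀ u₂)) (Complex.log (dd u₁ u₂))

lemma wedge_add_left (a b c : ℂ) : wedge (a+b) c = wedge a c + wedge b c := by
  simp [wedge, map_add, add_mul]
lemma wedge_sub_left (a b c : ℂ) : wedge (a-b) c = wedge a c - wedge b c := by
  simp [wedge, map_sub, sub_mul]
lemma wedge_add_right (a b c : ℂ) : wedge a (b+c) = wedge a b + wedge a c := by
  simp [wedge, map_add, mul_add]
lemma wedge_sub_right (a b c : ℂ) : wedge a (b-c) = wedge a b - wedge a c := by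
  simp [wedge, map_sub, mul_sub]
lemma wedge_self (a : ℂ) : wedge a a = 0 := ExteriorAlgebra.ι_sq_zero a
lemma wedge_antisymm (a b : ℂ) : wedge b a = - wedge a b := by
  have h := ExteriorAlgebra.ι_add_mul_swap (R := ℤ) a b
  unfold wedge
  linear_combination (norm := abel) h

lemma key_wedge (A B C D E F : ℂ) : wedge (C+D-B-E) (B+E-A-F) =
    (wedge D E - wedge D F + wedge E F) - (wedge B C - wedge B F + wedge C F)
    + (wedge A C - wedge A E + wedge C E) - (wedge A B - wedge A D + wedge B D) := by
  simp only [wedge_add_left, wedge_sub_left, wedge_add_right, wedge_sub_right, wedge_self,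
    wedge_antisymm B C, wedge_antisymm A C, wedge_antisymm B D, wedge_antisymm A D,
    wedge_antisymm A B, wedge_antisymm B E, wedge_antisymm A E]
  abel

theorem stmt6 (v₀ v₁ v₂ v₃ : ℂ × ℂ)
    (h01 : dd v₀ v₁ ≠ 0) (h02 : dd v₀ v₂ ≠ 0) (h03 : dd v₀ v₃ ≠ 0)
    (h12 : dd v₁ v₂ ≠ 0) (h13 : dd v₁ v₃ ≠ 0) (h23 : dd v₂ v₃ ≠ 0) :
    wedge (w0 v₀ v₁ v₂ v₃) (w1 v₀ v₁ v₂ v₃) =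
      mu v₁ v₂ v₃ - mu v₀ v₂ v₃ + mu v₀ v₁ v₃ - mu v₀ v₁ v₂ := by
  simp only [w0, w1, mu]
  exact key_wedge (Complex.log (dd v₀ v₁)) (Complex.log (dd v₀ v₂)) (Complex.log (dd v₀ v₃))
    (Complex.log (dd v₁ v₂)) (Complex.log (dd v₁ v₃)) (Complex.log (dd v₂ v₃))
end

section
/- For every natural number n and every open neighborhood U of the identity in SL(2,ℝ), there exists an open neighborhood Uₙ of the identity with Uₙ ⊆ U such that: (i) for all g ∈ SL(2,ℝ), g ∈ Uₙ if and only if g⁻¹ ∈ Uₙ; and (ii) for every k with 1 ≤ k ≤ n and all positive elements g₁,…,g_k ∈ Uₙ, the product g₁⋯g_k is a positive element and lies in U. -/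
/-!
Near the identity the diagonal entries are positive, and if `a` and `b` are positive with
`0 < a 1 1` and `0 < b 0 0` then `(a * b) 1 0 = a 1 0 * b 0 0 + a 1 1 * b 1 0 > 0`.
So it suffices to pick a symmetric open `Uₙ` such that all products of at most `n` of its
elements lie in `U` and have positive diagonal: then every suffix of `g₁ ⋯ g_k` has positive
upper-left entry, and positivity propagates from the right.
-/

/-- The topology on `SL(2,ℝ)` as a subspace of the `2×2` real matrices. -/
noncomputable instance : TopologicalSpace (Matrix.SpecialLinearGroup (Fin 2) ℝ) :=
  instTopologicalSpaceSubtype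

/-- An element of `SL(2,ℝ)` is positive if its lower-left entry is positive. -/
def IsPos (g : Matrix.SpecialLinearGroup (Fin 2) ℝ) : Prop :=
  0 < (g : Matrix (Fin 2) (Fin 2) ℝ) 1 0

open Topology
open scoped MatrixGroups

-- Mathlib's instance is for its own, merely defeq, topology on `SL n R`.
instance : IsTopologicalGroup SL(2, ℝ) := Matrix.SpecialLinearGroup.topologicalGroup

theorem exists_open_nhds_one_forall_list_prod_mem {M : Type*} [TopologicalSpace M] [Monoid M]
    [ContinuousMul M] {U : Set M} (hU : U ∈ 𝓝 1) (m : ℕ) :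
    ∃ V : Set M, IsOpen V ∧ 1 ∈ V ∧ V ⊆ U ∧
      ∀ l : List M, l.length ≤ m → (∀ x ∈ l, x ∈ V) → l.prod ∈ U := by
  induction m generalizing U with
  | zero =>
    refine ⟨interior U, isOpen_interior, mem_interior_iff_mem_nhds.2 hU, interior_subset, ?_⟩
    intro l hl _
    rw [List.length_eq_zero_iff.1 (Nat.le_zero.1 hl), List.prod_nil]
    exact mem_of_mem_nhds hU
  | succ m ih =>
    obtain ⟨W, hWo, hW1, hWW⟩ := exists_open_nhds_one_mul_subset hU
    obtain ⟨V, hVo, hV1, hVW, hV⟩ := ih (hWo.mem_nhds hW1)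
    refine ⟨V, hVo, hV1, fun x hx => hWW ⟨x, hVW hx, 1, hW1, mul_one x⟩, ?_⟩
    rintro (_ | ⟨a, l⟩) hl hmem
    · exact mem_of_mem_nhds hU
    · rw [List.prod_cons]
      exact hWW (Set.mul_mem_mul (hVW (hmem a List.mem_cons_self))
        (hV l (by simpa using hl) fun x hx => hmem x (List.mem_cons_of_mem a hx)))

theorem Matrix.mul_apply_one_zero_pos {R : Type*} [Semiring R] [PartialOrder R]
    [IsStrictOrderedRing R] {A B : Matrix (Fin 2) (Fin 2) R} (hA₁₀ : 0 < A 1 0)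
    (hA₁₁ : 0 < A 1 1) (hB₀₀ : 0 < B 0 0) (hB₁₀ : 0 < B 1 0) : 0 < (A * B) 1 0 := by
  rw [Matrix.mul_apply, Fin.sum_univ_two]
  exact add_pos (mul_pos hA₁₀ hB₀₀) (mul_pos hA₁₁ hB₁₀)

theorem IsPos.mul {a b : SL(2, ℝ)} (ha : IsPos a) (ha₁₁ : 0 < a 1 1) (hb : IsPos b)
    (hb₀₀ : 0 < b 0 0) : IsPos (a * b) := by
  rw [IsPos, Matrix.SpecialLinearGroup.coe_mul]
  exact Matrix.mul_apply_one_zero_pos ha ha₁₁ hb₀₀ hb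

theorem isPos_list_prod {l : List SL(2, ℝ)} (hl : l ≠ []) (hpos : ∀ x ∈ l, IsPos x ∧ 0 < x 1 1)
    (hsuffix : ∀ s, s <:+ l → 0 < s.prod 0 0) : IsPos l.prod := by
  induction l with
  | nil => exact absurd rfl hl
  | cons a t ih =>
    rcases eq_or_ne t [] with rfl | ht
    · simpa using (hpos a List.mem_cons_self).1
    · rw [List.prod_cons]
      exact (hpos a List.mem_cons_self).1.mul (hpos a List.mem_cons_self).2
        (ih ht (fun x hx => hpos x (List.mem_cons_of_mem a hx))
          fun s hs => hsuffix s (hs.trans (List.suffix_cons a t)))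
        (hsuffix t (List.suffix_cons a t))

theorem stmt7 (n : ℕ) (U : Set (Matrix.SpecialLinearGroup (Fin 2) ℝ))
    (hUopen : IsOpen U) (hU1 : (1 : Matrix.SpecialLinearGroup (Fin 2) ℝ) ∈ U) :
    ∃ Un : Set (Matrix.SpecialLinearGroup (Fin 2) ℝ),
      IsOpen Un ∧ (1 : Matrix.SpecialLinearGroup (Fin 2) ℝ) ∈ Un ∧ Un ⊆ U ∧
      (∀ g : Matrix.SpecialLinearGroup (Fin 2) ℝ, g ∈ Un ↔ g⁻¹ ∈ Un) ∧
      (∀ k : ℕ, 1 ≤ k → k ≤ n →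
        ∀ g : Fin k → Matrix.SpecialLinearGroup (Fin 2) ℝ,
          (∀ i, g i ∈ Un ∧ IsPos (g i)) →
            IsPos (List.ofFn g).prod ∧ (List.ofFn g).prod ∈ U) := by
  set D : Set SL(2, ℝ) := {g | 0 < g 0 0 ∧ 0 < g 1 1}
  have hD : IsOpen D := show IsOpen ({g : SL(2, ℝ) | 0 < g 0 0} ∩ {g | 0 < g 1 1}) from
    (isOpen_lt continuous_const (by fun_prop)).inter (isOpen_lt continuous_const (by fun_prop))
  obtain ⟨V, hVo, hV1, hVUD, hV⟩ :=
    exists_open_nhds_one_forall_list_prod_mem ((hUopen.inter hD).mem_nhds ⟨hU1, by simp [D]⟩) n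
  refine ⟨V ∩ V⁻¹, hVo.inter hVo.inv, ⟨hV1, by simpa using hV1⟩, fun g hg => (hVUD hg.1).1,
    fun g => by simp [and_comm], ?_⟩
  intro k hk hkn g hg
  have hsuffix : ∀ s, s <:+ List.ofFn g → s.prod ∈ U ∩ D := fun s hs =>
    hV s (hs.length_le.trans (by simpa using hkn)) fun x hx => by
      obtain ⟨i, rfl⟩ := List.mem_ofFn.1 (hs.subset hx)
      exact (hg i).1.1
  refine ⟨isPos_list_prod ?_ ?_ fun s hs => (hsuffix s hs).2.1, (hsuffix _ List.suffix_rfl).1⟩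
  · simpa [List.ofFn_eq_nil_iff] using Nat.one_le_iff_ne_zero.1 hk
  · intro x hx
    obtain ⟨i, rfl⟩ := List.mem_ofFn.1 hx
    exact ⟨(hg i).2, (hVUD (hg i).1.1).2.2⟩
end

section
/- The function L(z) := −(1/2)·Log(z)·Log(1/(1−z)) − ∫₀¹ Log(1−tz)/t dt − π²/6 is holomorphic (complex differentiable) on the open set Ω := ℂ \ {z ∈ ℂ | Im z = 0 and (Re z ≤ 0 or Re z ≥ 1)}, i.e. on the complex plane with the real intervals (−∞,0] and [1,∞) removed. -/
/-!
For `z` off the two rays and `t ∈ [0, 1]`, the point `1 - t z` stays in the slit plane of the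
principal logarithm, so the first term is holomorphic. On a closed ball around `z` compactness gives
`‖1 - t x‖ ≥ δ > 0`, which bounds the `x`-derivative `-(1 - t x)⁻¹` of the integrand uniformly.
Since `Log (1 - 0 · x) = 0`, the mean value inequality in `t` gives `‖Log (1 - t x)‖ ≤ t ‖x‖ / δ`,
so the integrand stays bounded despite the factor `1 / t`, and one may differentiate under the
integral sign.
-/

open Complex Metric Set MeasureTheory

def dilogDomain : Set ℂ := {z : ℂ | z.im = 0 ∧ (z.re ≤ 0 ∨ 1 ≤ z.re)}ᶜ

lemma isOpen_dilogDomain : IsOpen dilogDomain :=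
  ((isClosed_eq continuous_im continuous_const).inter
    ((isClosed_le continuous_re continuous_const).union
      (isClosed_le continuous_const continuous_re))).isOpen_compl

lemma one_sub_ofReal_mul_mem_slitPlane {z : ℂ} (hz : z ∈ dilogDomain) {t : ℝ}
    (ht : t ∈ Icc (0 : ℝ) 1) : 1 - (t : ℂ) * z ∈ slitPlane := by
  simp only [dilogDomain, mem_compl_iff, mem_ofPred_eq, not_and, not_or, not_le] at hz
  rw [mem_slitPlane_iff]
  simp only [sub_re, sub_im, one_re, one_im, mul_re, mul_im, ofReal_re, ofReal_im, zero_mul,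
    sub_zero, add_zero, zero_sub, neg_ne_zero, mul_ne_zero_iff, ne_eq]
  by_cases him : z.im = 0
  · obtain ⟨h0, h1⟩ := hz him
    left
    nlinarith [ht.1, ht.2]
  · rcases ht.1.eq_or_lt with rfl | htpos
    · simp
    · exact Or.inr ⟨htpos.ne', him⟩

lemma mem_slitPlane_of_mem_dilogDomain {z : ℂ} (hz : z ∈ dilogDomain) : z ∈ slitPlane := by
  simp only [dilogDomain, mem_compl_iff, mem_ofPred_eq, not_and, not_or, not_le] at hz
  rw [mem_slitPlane_iff]
  by_cases him : z.im = 0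
  · exact Or.inl (hz him).1
  · exact Or.inr him

lemma inv_mem_slitPlane {w : ℂ} (hw : w ∈ slitPlane) : w⁻¹ ∈ slitPlane := by
  have hns : 0 < normSq w := normSq_pos.mpr (slitPlane_ne_zero hw)
  rw [mem_slitPlane_iff, inv_re, inv_im] at *
  rcases hw with h | h
  · exact Or.inl (div_pos h hns)
  · exact Or.inr (div_ne_zero (neg_ne_zero.mpr h) hns.ne')

lemma hasDerivAt_log_one_sub_mul {c x : ℂ} (h : 1 - c * x ∈ slitPlane) :
    HasDerivAt (fun y => log (1 - c * y)) (-c / (1 - c * x)) x := by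
  simpa using (((hasDerivAt_id x).const_mul c).const_sub 1).clog h

lemma exists_pos_le_norm_one_sub_ofReal_mul {K : Set ℂ} (hK : IsCompact K)
    (hKΩ : K ⊆ dilogDomain) :
    ∃ δ > 0, ∀ t ∈ Icc (0 : ℝ) 1, ∀ x ∈ K, δ ≤ ‖1 - (t : ℂ) * x‖ := by
  obtain ⟨δ, hδ, hle⟩ := (isCompact_Icc.prod hK).exists_forall_le'
    (f := fun p : ℝ × ℂ => ‖1 - (p.1 : ℂ) * p.2‖) (by fun_prop) (a := 0)
    fun p hp => norm_pos_iff.2 <| slitPlane_ne_zero <|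
      one_sub_ofReal_mul_mem_slitPlane (hKΩ hp.2) hp.1
  exact ⟨δ, hδ, fun t ht x hx => hle (t, x) ⟨ht, hx⟩⟩

lemma norm_log_one_sub_ofReal_mul_le {x : ℂ} (hx : x ∈ dilogDomain) {δ : ℝ}
    (hδ : ∀ s ∈ Icc (0 : ℝ) 1, δ ≤ ‖1 - (s : ℂ) * x‖) (hδpos : 0 < δ) {t : ℝ}
    (ht : t ∈ Icc (0 : ℝ) 1) : ‖log (1 - t * x)‖ ≤ ‖x‖ / δ * t := by
  have hderiv : ∀ s ∈ Icc (0 : ℝ) 1, HasDerivWithinAt (fun s : ℝ => log (1 - s * x))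
      (-x / (1 - s * x)) (Icc 0 1) s := by
    intro s hs
    simpa using ((((hasDerivAt_id s).ofReal_comp).mul_const x).const_sub 1).clog_real
      (one_sub_ofReal_mul_mem_slitPlane hx hs) |>.hasDerivWithinAt
  have hbound : ∀ s ∈ Ico (0 : ℝ) 1, ‖-x / (1 - s * x)‖ ≤ ‖x‖ / δ := fun s hs => by
    rw [norm_div, norm_neg]
    exact div_le_div_of_nonneg_left (norm_nonneg x) hδpos (hδ s (Ico_subset_Icc_self hs))
  simpa using norm_image_sub_le_of_norm_deriv_le_segment' hderiv hbound t ht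

lemma hasDerivAt_integral_log_one_sub_ofReal_mul_div {z : ℂ} (hz : z ∈ dilogDomain) :
    HasDerivAt (fun x => ∫ t in (0 : ℝ)..1, log (1 - t * x) / t)
      (∫ t in (0 : ℝ)..1, -(1 - t * z)⁻¹) z := by
  obtain ⟨ε, hε, hball⟩ := nhds_basis_closedBall.mem_iff.mp (isOpen_dilogDomain.mem_nhds hz)
  obtain ⟨δ, hδ, hle⟩ := exists_pos_le_norm_one_sub_ofReal_mul (isCompact_closedBall z ε) hball
  have hmeas (x : ℂ) : Measurable fun t : ℝ => log (1 - t * x) / t :=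
    (measurable_log.comp (by fun_prop)).div (by fun_prop)
  have hint : IntervalIntegrable (fun t : ℝ => log (1 - t * z) / t) volume 0 1 := by
    rw [intervalIntegrable_iff_integrableOn_Ioc_of_le zero_le_one]
    refine Measure.integrableOn_of_bounded measure_Ioc_lt_top.ne (hmeas z).aestronglyMeasurable
      (M := ‖z‖ / δ) ((ae_restrict_iff' measurableSet_Ioc).2 (.of_forall fun t ht => ?_))
    rw [norm_div, norm_real, Real.norm_of_nonneg ht.1.le, div_le_iff₀ ht.1]
    exact norm_log_one_sub_ofReal_mul_le (hball (mem_closedBall_self hε.le))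
      (fun s hs => hle s hs z (mem_closedBall_self hε.le)) hδ (Ioc_subset_Icc_self ht)
  refine (intervalIntegral.hasDerivAt_integral_of_dominated_loc_of_deriv_le
    (F := fun x t => log (1 - t * x) / t) (F' := fun x t => -(1 - t * x)⁻¹)
    (bound := fun _ => δ⁻¹) (ball_mem_nhds z hε)
    (.of_forall fun x => (hmeas x).aestronglyMeasurable) hint
    (by fun_prop : Measurable fun t : ℝ => -(1 - t * z)⁻¹).aestronglyMeasurable ?_
    intervalIntegrable_const ?_).2
  · refine .of_forall fun t ht x hx => ?_
    rw [uIoc_of_le zero_le_one] at ht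
    rw [norm_neg, norm_inv]
    exact inv_anti₀ hδ (hle t (Ioc_subset_Icc_self ht) x (ball_subset_closedBall hx))
  · refine .of_forall fun t ht x hx => ?_
    rw [uIoc_of_le zero_le_one] at ht
    have := (hasDerivAt_log_one_sub_mul <| one_sub_ofReal_mul_mem_slitPlane
      (hball (ball_subset_closedBall hx)) (Ioc_subset_Icc_self ht)).div_const t
    rwa [div_right_comm, neg_div_self (ofReal_ne_zero.2 ht.1.ne'), neg_div, one_div] at this

/-- Rogers' dilogarithm `L(z) = −(1/2)Log(z)Log(1/(1−z)) + Li₂(z) − π²/6` is holomorphic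
on the complex plane with the real rays `(−∞,0]` and `[1,∞)` removed. -/
theorem stmt12 :
    DifferentiableOn ℂ
      (fun z : ℂ =>
        -(1/2 : ℂ) * Complex.log z * Complex.log (1 / (1 - z))
          - (∫ t in (0:ℝ)..1, Complex.log (1 - (t : ℂ) * z) / (t : ℂ))
          - (Real.pi : ℂ) ^ 2 / 6)
      {z : ℂ | z.im = 0 ∧ (z.re ≤ 0 ∨ 1 ≤ z.re)}ᶜ := by
  intro z (hz : z ∈ dilogDomain)
  have h1z : 1 - z ∈ slitPlane := by
    simpa using one_sub_ofReal_mul_mem_slitPlane hz (right_mem_Icc.2 zero_le_one)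
  have hlog_inv : DifferentiableAt ℂ (fun w => log (1 / (1 - w))) z :=
    ((differentiableAt_const 1).div ((differentiableAt_const 1).sub differentiableAt_id)
      (slitPlane_ne_zero h1z)).clog (by simpa using inv_mem_slitPlane h1z)
  exact ((((differentiableAt_const _).mul
    (differentiableAt_log (mem_slitPlane_of_mem_dilogDomain hz))).mul hlog_inv).sub
    (hasDerivAt_integral_log_one_sub_ofReal_mul_div hz).differentiableAt).sub
    (differentiableAt_const _) |>.differentiableWithinAt
end

section
/- Let n ≥ 1 and let σ be a finitely supported ℤ-linear combination of (n+1)-tuples of elements of SL(2,ℂ) such that every tuple (g₀,…,g_n) in the support of σ is good, i.e. gᵢ ≠ gⱼ and gᵢ ≠ −gⱼ for all i ≠ j, and such that ∂σ = 0, where ∂ is the simplicial boundary ∂(g₀,…,g_n) = Σᵢ(−1)ⁱ(g₀,…,ĝᵢ,…,g_n). Then there exists a finitely supported ℤ-linear combination τ of good (n+2)-tuples of elements of SL(2,ℂ) with ∂τ = σ. -/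
/-- The simplicial boundary `∂ : C_{n+1}(X) → C_n(X)`,
`∂(g₀,…,g_{n+1}) = Σ_i (-1)^i (g₀,…,ĝ_i,…,g_{n+1})`. -/
noncomputable def simplicialBoundary (X : Type*) (n : ℕ) :
    ((Fin (n + 2) → X) →₀ ℤ) →ₗ[ℤ] ((Fin (n + 1) → X) →₀ ℤ) :=
  Finsupp.lift ((Fin (n + 1) → X) →₀ ℤ) ℤ (Fin (n + 2) → X) fun g =>
    ∑ i : Fin (n + 2), ((-1 : ℤ) ^ (i : ℕ)) • Finsupp.single (g ∘ i.succAbove) 1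

/-- A tuple of elements of `SL(2,ℂ)` is good if `gᵢ ≠ ±gⱼ` for all `i ≠ j`. -/
def GoodTuple {m : ℕ} (g : Fin m → Matrix.SpecialLinearGroup (Fin 2) ℂ) : Prop :=
  ∀ i j, i ≠ j → g i ≠ g j ∧
    (g i : Matrix (Fin 2) (Fin 2) ℂ) ≠ -(g j : Matrix (Fin 2) (Fin 2) ℂ)

/-!
Cone off from a fresh vertex. Given a good cycle `σ`, choose `h ∈ SL(2,ℂ)` different from `±g`
for every entry `g` of every tuple in the support of `σ`; this is possible because the support
is finite and `SL(2,ℂ)` is infinite. The cone `h * σ`, obtained by prepending `h` to each tuple,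
is again good, and `∂(h * σ) = σ - h * ∂σ = σ`.
-/

open Matrix

noncomputable def simplicialCone (X : Type*) (n : ℕ) (h : X) :
    ((Fin (n + 1) → X) →₀ ℤ) →ₗ[ℤ] ((Fin (n + 2) → X) →₀ ℤ) :=
  Finsupp.lmapDomain ℤ ℤ (Fin.cons (α := fun _ => X) h)

section Cone

variable {X : Type*}

theorem simplicialBoundary_single (n : ℕ) (g : Fin (n + 2) → X) :
    simplicialBoundary X n (Finsupp.single g 1) =
      ∑ i : Fin (n + 2), ((-1 : ℤ) ^ (i : ℕ)) • Finsupp.single (g ∘ i.succAbove) 1 := by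
  simp [simplicialBoundary]

theorem simplicialBoundary_comp_simplicialCone (n : ℕ) (h : X) :
    simplicialBoundary X (n + 1) ∘ₗ simplicialCone X (n + 1) h =
      LinearMap.id - simplicialCone X n h ∘ₗ simplicialBoundary X n := by
  refine Finsupp.lhom_ext' fun g => LinearMap.ext_ring ?_
  have hface : ∀ j : Fin (n + 2),
      Fin.cons h g ∘ j.succ.succAbove = Fin.cons h (g ∘ j.succAbove) :=
    Fin.cons_comp_succ_succAbove h g
  simp only [LinearMap.comp_apply, LinearMap.sub_apply, LinearMap.id_apply, simplicialCone,
    Finsupp.lmapDomain_apply, Finsupp.lsingle_apply]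
  rw [Finsupp.mapDomain_single, simplicialBoundary_single, simplicialBoundary_single,
    Fin.sum_univ_succ, Finsupp.mapDomain_finsetSum]
  simp only [hface]
  simp [pow_succ, sub_eq_add_neg]

theorem simplicialBoundary_simplicialCone (n : ℕ) (h : X) (σ : (Fin (n + 2) → X) →₀ ℤ) :
    simplicialBoundary X (n + 1) (simplicialCone X (n + 1) h σ) =
      σ - simplicialCone X n h (simplicialBoundary X n σ) :=
  LinearMap.congr_fun (simplicialBoundary_comp_simplicialCone n h) σ

theorem support_simplicialCone_subset [DecidableEq X] (n : ℕ) (h : X)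
    (σ : (Fin (n + 1) → X) →₀ ℤ) :
    (simplicialCone X n h σ).support ⊆ σ.support.image (Fin.cons h) :=
  Finsupp.mapDomain_support

end Cone

instance Matrix.SpecialLinearGroup.infinite {n R : Type*} [Fintype n] [DecidableEq n]
    [Nontrivial n] [CommRing R] [Infinite R] : Infinite (SpecialLinearGroup n R) := by
  obtain ⟨i, j, hij⟩ := exists_pair_ne n
  refine Infinite.of_injective
    (fun c : R => (⟨Matrix.transvection i j c, det_transvection_of_ne i j hij c⟩ :
      SpecialLinearGroup n R)) fun a b hab => ?_
  simpa [Matrix.transvection, hij] using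
    congrArg (fun A : SpecialLinearGroup n R => (A : Matrix n n R) i j) hab

theorem GoodTuple.cons {m : ℕ} {h : SpecialLinearGroup (Fin 2) ℂ}
    {g : Fin m → SpecialLinearGroup (Fin 2) ℂ} (hg : GoodTuple g)
    (hh : ∀ k, h ≠ g k ∧ h ≠ -g k) : GoodTuple (Fin.cons h g) := by
  have hh_coe : ∀ k, h ≠ g k ∧ (h : Matrix (Fin 2) (Fin 2) ℂ) ≠ -(g k : Matrix (Fin 2) (Fin 2) ℂ) :=
    fun k => ⟨(hh k).1, fun e => (hh k).2 (Subtype.ext (by rw [e, SpecialLinearGroup.coe_neg]))⟩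
  intro i j hij
  induction i using Fin.cases with
  | zero =>
    induction j using Fin.cases with
    | zero => exact absurd rfl hij
    | succ l => simpa using hh_coe l
  | succ k =>
    induction j using Fin.cases with
    | zero =>
      simp only [Fin.cons_succ, Fin.cons_zero]
      exact ⟨fun e => (hh_coe k).1 e.symm, fun e => (hh_coe k).2 (by rw [e, neg_neg])⟩
    | succ l => simpa using hg k l (ne_of_apply_ne Fin.succ hij)

/-- Every good cycle (of degree `≥ 1`) in `C_*^{good}(SL(2,ℂ))` is the boundary of a
good chain. -/
theorem stmt17 (n : ℕ) (σ : (Fin (n + 2) → Matrix.SpecialLinearGroup (Fin 2) ℂ) →₀ ℤ)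
    (hgood : ∀ g ∈ σ.support, GoodTuple g)
    (hcycle : simplicialBoundary (Matrix.SpecialLinearGroup (Fin 2) ℂ) n σ = 0) :
    ∃ τ : (Fin (n + 3) → Matrix.SpecialLinearGroup (Fin 2) ℂ) →₀ ℤ,
      (∀ g ∈ τ.support, GoodTuple g) ∧
      simplicialBoundary (Matrix.SpecialLinearGroup (Fin 2) ℂ) (n + 1) τ = σ := by
  classical
  set entries := σ.support.biUnion fun g => Finset.univ.image g
  obtain ⟨h, hfresh⟩ := Infinite.exists_notMem_finset (entries ∪ entries.image Neg.neg)
  refine ⟨simplicialCone _ (n + 1) h σ, fun g' hg' => ?_, ?_⟩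
  · obtain ⟨g, hg, rfl⟩ := Finset.mem_image.mp (support_simplicialCone_subset _ _ _ hg')
    have hentry : ∀ k, g k ∈ entries := fun k =>
      Finset.mem_biUnion.mpr ⟨g, hg, Finset.mem_image_of_mem _ (Finset.mem_univ k)⟩
    refine (hgood g hg).cons fun k => ⟨?_, ?_⟩ <;> rintro rfl
    · exact hfresh (Finset.mem_union_left _ (hentry k))
    · exact hfresh (Finset.mem_union_right _ (Finset.mem_image_of_mem _ (hentry k)))
  · rw [simplicialBoundary_simplicialCone, hcycle, map_zero, sub_zero]
end
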